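/- arXiv:1901.04591 — 2 statements merged into one kernel-verified Lean document; each statement's English description precedes it below -/
import Mathlib

section
/- Let n ≥ 1 and let w be a permutation of {1,…,n}, acting on ℝ^n by w·e_i = e_{w(i)}. Let Γ = {e_i − e_j : 1 ≤ i, j ≤ n, i ≠ j}. Call a subset Γ′ ⊆ Γ a parabolic root subsystem if Γ′ = Γ ∩ span_ℝ(Γ′), and for a partition λ of {1,…,n} set Γ_λ = {e_i − e_j ∈ Γ : i and j lie in the same block of λ}. Then the map λ ↦ Γ_λ is a bijection from the set of w-stable partitions of {1,…,n} onto the set of w-stable parabolic root subsystems of Γ. -/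
noncomputable section

/-- The standard basis vector `e i` of `ℝ^n`. -/
def stdVec (n : ℕ) (i : Fin n) : Fin n → ℝ := Pi.single i 1

/-- The coordinate-permutation action of `w` on `ℝ^n`, satisfying `w · e i = e (w i)`. -/
def permAct {n : ℕ} (w : Equiv.Perm (Fin n)) (x : Fin n → ℝ) : Fin n → ℝ :=
  fun j => x (w⁻¹ j)

/-- `P` is a partition of `{1,…,n}`: pairwise disjoint nonempty blocks covering everything. -/
def IsPartition {n : ℕ} (P : Set (Set (Fin n))) : Prop :=
  (∀ B ∈ P, B.Nonempty) ∧ (∀ B ∈ P, ∀ C ∈ P, B ≠ C → Disjoint B C) ∧ ⋃₀ P = Set.univ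

/-- `P` is a `w`-stable partition: `w` maps every block onto a block. -/
def IsWStablePartition {n : ℕ} (w : Equiv.Perm (Fin n)) (P : Set (Set (Fin n))) : Prop :=
  IsPartition P ∧ ∀ B ∈ P, (⇑w) '' B ∈ P

/-- The root system `Γ = {e i − e j : i ≠ j}` of type `A_{n-1}`. -/
def rootSet (n : ℕ) : Set (Fin n → ℝ) :=
  {x | ∃ i j : Fin n, i ≠ j ∧ x = stdVec n i - stdVec n j}

/-- A parabolic root subsystem: `Γ' ⊆ Γ` with `Γ' = Γ ∩ span_ℝ Γ'`. -/
def IsParabolicSubsystem {n : ℕ} (Γ' : Set (Fin n → ℝ)) : Prop :=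
  Γ' ⊆ rootSet n ∧ Γ' = rootSet n ∩ (Submodule.span ℝ Γ' : Set (Fin n → ℝ))

/-- A set of vectors is `w`-stable if it is invariant under the coordinate permutation action. -/
def IsWStableSet {n : ℕ} (w : Equiv.Perm (Fin n)) (X : Set (Fin n → ℝ)) : Prop :=
  ∀ x ∈ X, permAct w x ∈ X

/-- The parabolic root subsystem `Γ_λ` attached to a partition `λ`:
roots `e i − e j` with `i, j` in the same block. -/
def rootsOfPartition {n : ℕ} (P : Set (Set (Fin n))) : Set (Fin n → ℝ) :=
  {x | ∃ i j : Fin n, i ≠ j ∧ (∃ B ∈ P, i ∈ B ∧ j ∈ B) ∧ x = stdVec n i - stdVec n j}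

/-!
A partition is the same thing as an equivalence relation, and `Γ_λ` records the relation
"same block of `λ`" off the diagonal, so `λ ↦ Γ_λ` is injective. `Γ_λ` is parabolic because
for every block `B` the block sum `x ↦ ∑_{i ∈ B} x i` vanishes on `span Γ_λ` but not on
`e i - e j` when `i ∈ B`, `j ∉ B`. Conversely, for a parabolic `Γ'` the relation
`i = j ∨ e i - e j ∈ Γ'` is an equivalence relation, since `e j - e i` and
`e i - e k = (e i - e j) + (e j - e k)` lie in `Γ ∩ span Γ'`; its classes form a partition `λ`
with `Γ_λ = Γ'`. As `Γ'` is finite, `w`-stability of `Γ'` implies `w⁻¹`-stability, which makes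
this relation `w`-invariant and its classes permuted by `w`.
-/

namespace Setoid

variable {α : Type*}

theorem IsPartition.eq_of_sameBlock_iff {c d : Set (Set α)} (hc : IsPartition c)
    (hd : IsPartition d) (h : ∀ x y, (∃ s ∈ c, x ∈ s ∧ y ∈ s) ↔ ∃ s ∈ d, x ∈ s ∧ y ∈ s) :
    c = d :=
  calc c = (mkClasses c hc.2).classes := (classes_mkClasses c hc).symm
    _ = (mkClasses d hd.2).classes := by
      congr 1
      ext x y
      simp only [rel_iff_exists_classes, classes_mkClasses c hc, classes_mkClasses d hd, h]
    _ = d := classes_mkClasses d hd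

theorem image_mem_classes {r : Setoid α} (w : Equiv.Perm α)
    (hw : ∀ x y, r x y → r (w x) (w y)) (hw' : ∀ x y, r x y → r (w⁻¹ x) (w⁻¹ y))
    {s : Set α} (hs : s ∈ r.classes) : ⇑w '' s ∈ r.classes := by
  obtain ⟨y, rfl⟩ := hs
  refine ⟨w y, Set.ext fun x => ?_⟩
  rw [Equiv.image_eq_preimage_symm]
  exact ⟨fun h => by simpa using hw _ _ h, fun h => by simpa using hw' _ _ h⟩

end Setoid

section

variable {n : ℕ}

theorem isPartition_iff_setoid_isPartition {P : Set (Set (Fin n))} :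
    IsPartition P ↔ Setoid.IsPartition P := by
  refine ⟨fun ⟨hne, hdisj, hcover⟩ => ?_, fun h => ?_⟩
  · refine Set.PairwiseDisjoint.isPartition_of_exists_of_ne_empty
      (fun B hB C hC hBC => hdisj B hB C hC hBC) (Set.sUnion_eq_univ_iff.1 hcover)
      (fun h => (hne ∅ h).ne_empty rfl)
  · exact ⟨fun B => Setoid.nonempty_of_mem_partition h,
      fun B hB C hC => h.pairwiseDisjoint hB hC, h.sUnion_eq_univ⟩

section Roots

theorem stdVec_apply (i j : Fin n) : stdVec n i j = if j = i then 1 else 0 :=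
  Pi.single_apply i 1 j

theorem stdVec_sub_stdVec_inj {i j k l : Fin n} (hij : i ≠ j)
    (h : stdVec n i - stdVec n j = stdVec n k - stdVec n l) : i = k ∧ j = l := by
  have hi := congrFun h i
  have hj := congrFun h j
  simp only [Pi.sub_apply, stdVec_apply] at hi hj
  grind

theorem rootSet_finite : (rootSet n).Finite :=
  (Set.finite_range fun p : Fin n × Fin n => stdVec n p.1 - stdVec n p.2).subset
    fun _ ⟨i, j, _, hx⟩ => ⟨(i, j), hx.symm⟩

theorem permAct_stdVec (w : Equiv.Perm (Fin n)) (i : Fin n) :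
    permAct w (stdVec n i) = stdVec n (w i) := by
  funext j
  simp only [permAct, stdVec_apply, Equiv.Perm.eq_inv_iff_eq, eq_comm]

theorem permAct_stdVec_sub_stdVec (w : Equiv.Perm (Fin n)) (i j : Fin n) :
    permAct w (stdVec n i - stdVec n j) = stdVec n (w i) - stdVec n (w j) := by
  rw [← permAct_stdVec, ← permAct_stdVec]
  rfl

theorem permAct_inv_permAct (w : Equiv.Perm (Fin n)) (x : Fin n → ℝ) :
    permAct w⁻¹ (permAct w x) = x := by
  funext j
  simp [permAct]

theorem IsWStableSet.inv {w : Equiv.Perm (Fin n)} {X : Set (Fin n → ℝ)} (hX : X.Finite)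
    (hw : IsWStableSet w X) : IsWStableSet w⁻¹ X := by
  have hsurj : Set.SurjOn (permAct w) X X :=
    ((hX.injOn_iff_bijOn_of_mapsTo hw).1 fun x _ y _ hxy => by
      rw [← permAct_inv_permAct w x, hxy, permAct_inv_permAct]).surjOn
  intro x hx
  obtain ⟨y, hy, rfl⟩ := hsurj hx
  rwa [permAct_inv_permAct]

end Roots

section OfPartition

theorem mem_rootsOfPartition_iff {P : Set (Set (Fin n))} {i j : Fin n} (hij : i ≠ j) :
    stdVec n i - stdVec n j ∈ rootsOfPartition P ↔ ∃ B ∈ P, i ∈ B ∧ j ∈ B := by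
  refine ⟨fun ⟨k, l, _, hkl, h⟩ => ?_, fun h => ⟨i, j, hij, h, rfl⟩⟩
  obtain ⟨rfl, rfl⟩ := stdVec_sub_stdVec_inj hij h
  exact hkl

theorem sameBlock_iff_eq_or_mem_rootsOfPartition {P : Set (Set (Fin n))} (hP : IsPartition P)
    (i j : Fin n) :
    (∃ B ∈ P, i ∈ B ∧ j ∈ B) ↔ i = j ∨ stdVec n i - stdVec n j ∈ rootsOfPartition P := by
  rcases eq_or_ne i j with rfl | hij
  · simpa using Set.sUnion_eq_univ_iff.1 hP.2.2 i
  · simp [hij, mem_rootsOfPartition_iff hij]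

theorem rootsOfPartition_injOn : Set.InjOn (rootsOfPartition (n := n)) {P | IsPartition P} :=
  fun P hP Q hQ h =>
    (isPartition_iff_setoid_isPartition.1 hP).eq_of_sameBlock_iff
      (isPartition_iff_setoid_isPartition.1 hQ) fun i j => by
        rw [sameBlock_iff_eq_or_mem_rootsOfPartition hP, h,
          sameBlock_iff_eq_or_mem_rootsOfPartition hQ]

open Classical in
def blockSum (B : Set (Fin n)) : (Fin n → ℝ) →ₗ[ℝ] ℝ :=
  ∑ i ∈ B.toFinset, LinearMap.proj i

open Classical in
theorem blockSum_stdVec (B : Set (Fin n)) (i : Fin n) :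
    blockSum B (stdVec n i) = if i ∈ B then 1 else 0 := by
  simp [blockSum, stdVec, Pi.single_apply]

theorem blockSum_eq_zero_of_mem_span {P : Set (Set (Fin n))} (hP : IsPartition P)
    {B : Set (Fin n)} (hB : B ∈ P) {x : Fin n → ℝ}
    (hx : x ∈ Submodule.span ℝ (rootsOfPartition P)) : blockSum B x = 0 := by
  refine (Submodule.span_le (p := LinearMap.ker (blockSum B)).2 ?_ hx : _)
  rintro _ ⟨i, j, -, ⟨C, hC, hiC, hjC⟩, rfl⟩
  obtain rfl | hBC := eq_or_ne B C
  · simp [blockSum_stdVec, hiC, hjC]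
  · have hiB : i ∉ B := fun hiB => Set.disjoint_left.1 (hP.2.1 B hB C hC hBC) hiB hiC
    have hjB : j ∉ B := fun hjB => Set.disjoint_left.1 (hP.2.1 B hB C hC hBC) hjB hjC
    simp [blockSum_stdVec, hiB, hjB]

theorem isParabolicSubsystem_rootsOfPartition {P : Set (Set (Fin n))} (hP : IsPartition P) :
    IsParabolicSubsystem (rootsOfPartition P) := by
  have hsub : rootsOfPartition P ⊆ rootSet n := fun _ ⟨i, j, hij, _, hx⟩ => ⟨i, j, hij, hx⟩
  refine ⟨hsub, Set.Subset.antisymm (fun x hx => ⟨hsub hx, Submodule.subset_span hx⟩) ?_⟩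
  rintro _ ⟨⟨i, j, hij, rfl⟩, hspan⟩
  obtain ⟨B, hB, hiB⟩ := Set.sUnion_eq_univ_iff.1 hP.2.2 i
  refine (mem_rootsOfPartition_iff hij).2 ⟨B, hB, hiB, ?_⟩
  by_contra hjB
  simpa [blockSum_stdVec, hiB, hjB] using blockSum_eq_zero_of_mem_span hP hB hspan

theorem IsWStablePartition.isWStableSet_rootsOfPartition {w : Equiv.Perm (Fin n)}
    {P : Set (Set (Fin n))} (hP : IsWStablePartition w P) :
    IsWStableSet w (rootsOfPartition P) := by
  rintro _ ⟨i, j, hij, ⟨B, hB, hiB, hjB⟩, rfl⟩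
  rw [permAct_stdVec_sub_stdVec]
  exact ⟨w i, w j, w.injective.ne hij, ⟨⇑w '' B, hP.2 B hB, ⟨i, hiB, rfl⟩, ⟨j, hjB, rfl⟩⟩, rfl⟩

end OfPartition

section OfParabolic

variable {Γ' : Set (Fin n → ℝ)}

theorem IsParabolicSubsystem.stdVec_sub_mem (hΓ : IsParabolicSubsystem Γ') {i j : Fin n}
    (hij : i ≠ j) (h : stdVec n i - stdVec n j ∈ Submodule.span ℝ Γ') :
    stdVec n i - stdVec n j ∈ Γ' :=
  hΓ.2 ▸ ⟨⟨i, j, hij, rfl⟩, h⟩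

def IsParabolicSubsystem.setoid (hΓ : IsParabolicSubsystem Γ') : Setoid (Fin n) where
  r i j := i = j ∨ stdVec n i - stdVec n j ∈ Γ'
  iseqv := by
    refine ⟨fun _ => Or.inl rfl, fun {i j} hij => ?_, fun {i j k} hij hjk => ?_⟩
    · obtain rfl | hij := hij
      · exact Or.inl rfl
      obtain rfl | hne := eq_or_ne i j
      · exact Or.inl rfl
      refine Or.inr (hΓ.stdVec_sub_mem hne.symm ?_)
      rw [← neg_sub]
      exact neg_mem (Submodule.subset_span hij)
    · obtain rfl | hij := hij
      · exact hjk
      obtain rfl | hjk := hjk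
      · exact Or.inr hij
      obtain rfl | hne := eq_or_ne i k
      · exact Or.inl rfl
      refine Or.inr (hΓ.stdVec_sub_mem hne ?_)
      rw [← sub_add_sub_cancel _ (stdVec n j)]
      exact add_mem (Submodule.subset_span hij) (Submodule.subset_span hjk)

theorem IsParabolicSubsystem.rootsOfPartition_classes (hΓ : IsParabolicSubsystem Γ') :
    rootsOfPartition hΓ.setoid.classes = Γ' := by
  ext x
  simp only [rootsOfPartition, ← Setoid.rel_iff_exists_classes]
  refine ⟨?_, fun hx => ?_⟩
  · rintro ⟨i, j, hij, h, rfl⟩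
    exact h.resolve_left hij
  · obtain ⟨i, j, hij, rfl⟩ := hΓ.1 hx
    exact ⟨i, j, hij, Or.inr hx, rfl⟩

theorem IsParabolicSubsystem.setoid_apply (hΓ : IsParabolicSubsystem Γ')
    {w : Equiv.Perm (Fin n)} (hw : IsWStableSet w Γ') {i j : Fin n} (h : hΓ.setoid i j) :
    hΓ.setoid (w i) (w j) := by
  obtain rfl | h := h
  · exact Or.inl rfl
  · exact Or.inr (permAct_stdVec_sub_stdVec w i j ▸ hw _ h)

theorem IsParabolicSubsystem.isWStablePartition_classes (hΓ : IsParabolicSubsystem Γ')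
    {w : Equiv.Perm (Fin n)} (hw : IsWStableSet w Γ') :
    IsWStablePartition w hΓ.setoid.classes :=
  ⟨isPartition_iff_setoid_isPartition.2 (Setoid.isPartition_classes _),
    fun _ => Setoid.image_mem_classes w (fun _ _ => hΓ.setoid_apply hw)
      (fun _ _ => hΓ.setoid_apply (hw.inv (rootSet_finite.subset hΓ.1)))⟩

end OfParabolic

end

theorem partition_bij_parabolic_general (n : ℕ) (w : Equiv.Perm (Fin n)) :
    Set.BijOn (rootsOfPartition (n := n))
      {P | IsWStablePartition w P}
      {Γ' | IsParabolicSubsystem Γ' ∧ IsWStableSet w Γ'} := by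
  refine ⟨fun P hP => ⟨isParabolicSubsystem_rootsOfPartition hP.1,
      hP.isWStableSet_rootsOfPartition⟩,
    rootsOfPartition_injOn.mono fun P hP => hP.1, ?_⟩
  rintro Γ' ⟨hΓ, hw⟩
  exact ⟨hΓ.setoid.classes, hΓ.isWStablePartition_classes hw, hΓ.rootsOfPartition_classes⟩

/-- `λ ↦ Γ_λ` is a bijection from the set of `w`-stable partitions of
`{1,…,n}` onto the set of `w`-stable parabolic root subsystems of `Γ`. -/
theorem partition_bij_parabolic (n : ℕ) (hn : 1 ≤ n) (w : Equiv.Perm (Fin n)) :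
    Set.BijOn (rootsOfPartition (n := n))
      {P | IsWStablePartition w P}
      {Γ' | IsParabolicSubsystem Γ' ∧ IsWStableSet w Γ'} :=
  partition_bij_parabolic_general n w
end
end

section
/- Let n ≥ 1, d₀ ≥ 1, a = ⌊n/d₀⌋, and let w be a permutation of {1,…,n} that is a product of a pairwise disjoint d₀-cycles; let w act on ℂ^n by w·e_i = e_{w(i)}. Let ζ ∈ ℂ be a primitive d₀-th root of unity, 𝒱 = {x ∈ ℂ^n : x_1 + ⋯ + x_n = 0}, and 𝒱(w,ζ) = {x ∈ 𝒱 : w·x = ζx}. Let Γ = {e_i − e_j : i ≠ j} and, for a w-stable partition λ of {1,…,n}, let Γ_λ = {e_i − e_j ∈ Γ : i and j lie in the same block of λ}; orthogonal complements (−)^⊥ are taken in ℂ^n with respect to the standard inner product. Then the following are equivalent: (i) (𝒱(w,ζ) ∩ Γ_λ^⊥)^⊥ ∩ Γ = Γ_λ; (ii) w permutes the blocks of λ with at most one fixed block, and every other ⟨w⟩-orbit of blocks has length d₀. -/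
noncomputable section

/-- The standard basis vector `e i` of `ℂ^n`. -/
def stdVecC (n : ℕ) (i : Fin n) : Fin n → ℂ := Pi.single i 1

/-- The coordinate-permutation action of `w` on `ℂ^n`, satisfying `w · e i = e (w i)`. -/
def permActC {n : ℕ} (w : Equiv.Perm (Fin n)) (x : Fin n → ℂ) : Fin n → ℂ :=
  fun j => x (w⁻¹ j)

/-- The root system `Γ = {e i − e j : i ≠ j}`. -/
def rootSetC (n : ℕ) : Set (Fin n → ℂ) :=
  {x | ∃ i j : Fin n, i ≠ j ∧ x = stdVecC n i - stdVecC n j}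

/-- The set `Γ_λ` of roots `e i − e j` with `i, j` in one block of the partition `P`. -/
def rootsOfPartitionC {n : ℕ} (P : Set (Set (Fin n))) : Set (Fin n → ℂ) :=
  {x | ∃ i j : Fin n, i ≠ j ∧ (∃ B ∈ P, i ∈ B ∧ j ∈ B) ∧ x = stdVecC n i - stdVecC n j}

/-- The standard inner product on `ℂ^n`. -/
def stdInner {n : ℕ} (y x : Fin n → ℂ) : ℂ := ∑ i, (starRingEnd ℂ) (y i) * x i

/-- Orthogonal complement in `ℂ^n` with respect to the standard inner product. -/
def perp {n : ℕ} (X : Set (Fin n → ℂ)) : Set (Fin n → ℂ) :=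
  {y | ∀ x ∈ X, stdInner y x = 0}

/-- The hyperplane `𝒱 = {x : x₁ + ⋯ + xₙ = 0}` (the ℂ-span of `Γ`). -/
def sumZero (n : ℕ) : Set (Fin n → ℂ) := {x | ∑ i, x i = 0}

/-- The `ζ`-eigenspace `𝒱(w,ζ)` of `w` on `𝒱`. -/
def eigSpace {n : ℕ} (w : Equiv.Perm (Fin n)) (ζ : ℂ) : Set (Fin n → ℂ) :=
  {x ∈ sumZero n | permActC w x = ζ • x}

/-- The `⟨w⟩`-orbit of a block `B`. -/
def blockOrbit {n : ℕ} (w : Equiv.Perm (Fin n)) (B : Set (Fin n)) : Set (Set (Fin n)) :=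
  {C | ∃ k : ℕ, C = (⇑(w ^ k)) '' B}


/-!
A vector of `𝒱(w,ζ) ∩ Γ_λ^⊥` is a function `x` constant on blocks with `x(B) = ζ x(w B)`.
If the `⟨w⟩`-orbit of a block `B` has length `m ≠ d₀`, then `m ∣ d₀` gives `ζ ^ m ≠ 1`, and
`x(B) = ζ ^ m x(B)` forces `x` to vanish on `B`; two distinct such blocks therefore yield a root
`e i - e j ∉ Γ_λ` orthogonal to the whole space. Conversely, if the orbit of `B` has length `d₀`,
the vector equal to `ζ⁻¹ ^ k` on `w ^ k B` and to `0` elsewhere lies in the space and separates `B`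
from every other block. So (i) says that at most one block has orbit length `≠ d₀`, and so
does (ii): fixed blocks have orbit length `1`, while `d₀ ≠ 1` as a cycle type has no `1`.
-/

open Function

section Development

variable {n : ℕ}

lemma stdInner_stdVecC_sub_stdVecC (i j : Fin n) (x : Fin n → ℂ) :
    stdInner (stdVecC n i - stdVecC n j) x = x i - x j := by
  simp [stdInner, stdVecC, Pi.single_apply, sub_mul, ite_mul, Finset.sum_sub_distrib]

lemma stdInner_stdVecC_sub_stdVecC_right (x : Fin n → ℂ) (i j : Fin n) :
    stdInner x (stdVecC n i - stdVecC n j) = star (x i) - star (x j) := by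
  simp [stdInner, stdVecC, Pi.single_apply, mul_sub, mul_ite, Finset.sum_sub_distrib]

lemma eq_and_eq_of_stdVecC_sub_stdVecC_eq {i j k l : Fin n} (hij : i ≠ j)
    (h : stdVecC n i - stdVecC n j = stdVecC n k - stdVecC n l) : i = k ∧ j = l := by
  have hi := congr_fun h i
  have hj := congr_fun h j
  simp [stdVecC, Pi.single_apply, hij, hij.symm] at hi hj
  constructor
  · split_ifs at hi <;> first | assumption | norm_num at hi
  · split_ifs at hj <;> first | assumption | norm_num at hj

lemma mem_perp_rootsOfPartitionC_iff {P : Set (Set (Fin n))} {x : Fin n → ℂ} :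
    x ∈ perp (rootsOfPartitionC P) ↔ ∀ B ∈ P, ∀ i ∈ B, ∀ j ∈ B, x i = x j := by
  constructor
  · intro hx B hB i hi j hj
    by_cases hij : i = j
    · rw [hij]
    · have h := hx _ ⟨i, j, hij, ⟨B, hB, hi, hj⟩, rfl⟩
      rw [stdInner_stdVecC_sub_stdVecC_right, sub_eq_zero] at h
      exact star_injective h
  · rintro hx _ ⟨i, j, -, ⟨B, hB, hi, hj⟩, rfl⟩
    rw [stdInner_stdVecC_sub_stdVecC_right, hx B hB i hi j hj, sub_self]

lemma perp_inter_rootSetC_eq_rootsOfPartitionC_iff {P : Set (Set (Fin n))}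
    {X : Set (Fin n → ℂ)} (hX : ∀ x ∈ X, ∀ B ∈ P, ∀ i ∈ B, ∀ j ∈ B, x i = x j) :
    perp X ∩ rootSetC n = rootsOfPartitionC P ↔
      ∀ i j, i ≠ j → (¬∃ B ∈ P, i ∈ B ∧ j ∈ B) → ∃ x ∈ X, x i ≠ x j := by
  have hperp : ∀ i j, stdVecC n i - stdVecC n j ∈ perp X ↔ ∀ x ∈ X, x i = x j := fun i j => by
    simp only [perp, Set.mem_ofPred_eq, stdInner_stdVecC_sub_stdVecC, sub_eq_zero]
  constructor
  · intro h i j hij hij'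
    by_contra! hXij
    have hroot : stdVecC n i - stdVecC n j ∈ rootsOfPartitionC P :=
      h ▸ ⟨(hperp i j).2 hXij, i, j, hij, rfl⟩
    obtain ⟨k, l, -, hB, heq⟩ := hroot
    obtain ⟨rfl, rfl⟩ := eq_and_eq_of_stdVecC_sub_stdVecC_eq hij heq
    exact hij' hB
  · intro h
    ext y
    constructor
    · rintro ⟨hy, i, j, hij, rfl⟩
      refine ⟨i, j, hij, ?_, rfl⟩
      by_contra hB
      obtain ⟨x, hx, hxij⟩ := h i j hij hB
      exact hxij ((hperp i j).1 hy x hx)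
    · rintro ⟨i, j, hij, ⟨B, hB, hi, hj⟩, rfl⟩
      exact ⟨(hperp i j).2 fun x hx => hX x hx B hB i hi j hj, i, j, hij, rfl⟩

-- The condition `∑ i, x i = 0` is automatic: summing `x i = ζ * x (w i)` gives `s = ζ s`.
lemma mem_eigSpace_iff_of_ne_one {w : Equiv.Perm (Fin n)} {ζ : ℂ} (hζ : ζ ≠ 1)
    {x : Fin n → ℂ} : x ∈ eigSpace w ζ ↔ ∀ i, x i = ζ * x (w i) := by
  have heig : permActC w x = ζ • x ↔ ∀ i, x i = ζ * x (w i) := by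
    simp only [funext_iff, permActC, Pi.smul_apply, smul_eq_mul]
    exact ⟨fun h i => by simpa using h (w i), fun h j => by simpa using h (w⁻¹ j)⟩
  refine ⟨fun hx => heig.1 hx.2, fun hx => ⟨?_, heig.2 hx⟩⟩
  have hsum : ζ * ∑ i, x i = 1 * ∑ i, x i :=
    calc ζ * ∑ i, x i = ∑ i, ζ * x (w i) := by rw [← Finset.mul_sum, Equiv.sum_comp w x]
      _ = 1 * ∑ i, x i := by rw [one_mul]; exact (Finset.sum_congr rfl fun i _ => hx i).symm
  by_contra hs
  exact hζ (mul_right_cancel₀ hs hsum)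

lemma eq_pow_mul_apply_pow {w : Equiv.Perm (Fin n)} {ζ : ℂ} {x : Fin n → ℂ}
    (hx : ∀ i, x i = ζ * x (w i)) (k : ℕ) (i : Fin n) : x i = ζ ^ k * x ((w ^ k) i) := by
  induction k generalizing i with
  | zero => simp
  | succ k ih =>
    rw [hx i, ih (w i), pow_succ w, Equiv.Perm.mul_apply, ← mul_assoc, ← pow_succ']

lemma perm_pow_image_eq_iterate {α : Type*} (w : Equiv.Perm α) (k : ℕ) (B : Set α) :
    ⇑(w ^ k) '' B = (Set.image w)^[k] B := by
  rw [← Equiv.Perm.iterate_eq_pow, Set.image_iterate_eq]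

lemma mem_periodicPts_image_perm {α : Type*} [Finite α] (w : Equiv.Perm α) (B : Set α) :
    B ∈ periodicPts (Set.image w) :=
  (Set.image_injective.2 w.injective).mem_periodicPts B

lemma minimalPeriod_image_perm_dvd {α : Type*} {w : Equiv.Perm α} {d : ℕ} (hw : w ^ d = 1)
    (B : Set α) : minimalPeriod (Set.image w) B ∣ d := by
  apply IsPeriodicPt.minimalPeriod_dvd
  rw [IsPeriodicPt, IsFixedPt, ← perm_pow_image_eq_iterate, hw]
  exact Set.image_id B

lemma Function.ncard_range_iterate {α : Type*} {f : α → α} {x : α} (hx : x ∈ periodicPts f) :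
    (Set.range fun k => f^[k] x).ncard = minimalPeriod f x := by
  have hrange : (Set.range fun k => f^[k] x) = (fun k => f^[k] x) '' Set.Iio (minimalPeriod f x) := by
    ext y
    constructor
    · rintro ⟨k, rfl⟩
      exact ⟨k % minimalPeriod f x, Nat.mod_lt _ (minimalPeriod_pos_of_mem_periodicPts hx),
        iterate_mod_minimalPeriod_eq⟩
    · rintro ⟨k, -, rfl⟩
      exact ⟨k, rfl⟩
  rw [hrange, iterate_injOn_Iio_minimalPeriod.ncard_image, Set.ncard_Iio_nat]

lemma ncard_blockOrbit (w : Equiv.Perm (Fin n)) (B : Set (Fin n)) :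
    (blockOrbit w B).ncard = minimalPeriod (Set.image w) B := by
  have hrange : blockOrbit w B = Set.range fun k => (Set.image w)^[k] B := by
    ext C
    simp only [blockOrbit, perm_pow_image_eq_iterate, Set.mem_ofPred_eq, Set.mem_range, eq_comm]
  rw [hrange, Function.ncard_range_iterate (mem_periodicPts_image_perm w B)]

lemma IsPartition.exists_mem {P : Set (Set (Fin n))} (hP : IsPartition P) (i : Fin n) :
    ∃ B ∈ P, i ∈ B :=
  Set.mem_sUnion.1 (hP.2.2 ▸ Set.mem_univ i)

lemma IsPartition.eq_of_mem_of_mem {P : Set (Set (Fin n))} (hP : IsPartition P)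
    {B C : Set (Fin n)} (hB : B ∈ P) (hC : C ∈ P) {i : Fin n} (hiB : i ∈ B) (hiC : i ∈ C) :
    B = C := by
  by_contra h
  exact Set.disjoint_left.mp (hP.2.1 B hB C hC h) hiB hiC

lemma IsPartition.mem_iff_mem {P : Set (Set (Fin n))} (hP : IsPartition P)
    {D E : Set (Fin n)} (hD : D ∈ P) (hE : E ∈ P) {i j : Fin n} (hi : i ∈ D) (hj : j ∈ D) :
    i ∈ E ↔ j ∈ E :=
  ⟨fun h => hP.eq_of_mem_of_mem hD hE hi h ▸ hj, fun h => hP.eq_of_mem_of_mem hD hE hj h ▸ hi⟩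

lemma IsWStablePartition.iterate_image_mem {w : Equiv.Perm (Fin n)} {P : Set (Set (Fin n))}
    (hP : IsWStablePartition w P) {B : Set (Fin n)} (hB : B ∈ P) (k : ℕ) :
    (Set.image w)^[k] B ∈ P := by
  induction k with
  | zero => exact hB
  | succ k ih => rw [iterate_succ_apply']; exact hP.2 _ ih

lemma eq_zero_of_minimalPeriod_ne {w : Equiv.Perm (Fin n)} {ζ : ℂ} {d : ℕ} {x : Fin n → ℂ}
    {B : Set (Fin n)} (hζ : IsPrimitiveRoot ζ d) (hx : ∀ i, x i = ζ * x (w i))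
    (hxB : ∀ i ∈ B, ∀ j ∈ B, x i = x j) (hdvd : minimalPeriod (Set.image w) B ∣ d)
    (hne : minimalPeriod (Set.image w) B ≠ d) {i : Fin n} (hi : i ∈ B) : x i = 0 := by
  set m := minimalPeriod (Set.image w) B
  have hζm : ζ ^ m ≠ 1 := fun h => hne (Nat.dvd_antisymm hdvd ((hζ.pow_eq_one_iff_dvd m).1 h))
  have hwi : (w ^ m) i ∈ B := by
    rw [← iterate_minimalPeriod (f := Set.image w) (x := B), ← perm_pow_image_eq_iterate]
    exact Set.mem_image_of_mem _ hi
  have h := eq_pow_mul_apply_pow hx m i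
  rw [hxB _ hwi i hi, ← one_mul (x i), ← mul_assoc, mul_one] at h
  by_contra h0
  exact hζm (mul_right_cancel₀ h0 h).symm

def orbitVector (w : Equiv.Perm (Fin n)) (c : ℂ) (B : Set (Fin n)) : Fin n → ℂ :=
  fun p => ∑ k ∈ Finset.range (minimalPeriod (Set.image w) B),
    ((Set.image w)^[k] B).indicator (fun _ => c ^ k) p

section OrbitVector

variable {w : Equiv.Perm (Fin n)} {P : Set (Set (Fin n))} {B : Set (Fin n)} {c : ℂ}

lemma orbitVector_apply_of_mem (hP : IsWStablePartition w P) (hB : B ∈ P) {k : ℕ}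
    (hk : k < minimalPeriod (Set.image w) B) {p : Fin n} (hp : p ∈ (Set.image w)^[k] B) :
    orbitVector w c B p = c ^ k := by
  rw [orbitVector, Finset.sum_eq_single_of_mem k (Finset.mem_range.2 hk), Set.indicator_of_mem hp]
  intro l hl hlk
  refine Set.indicator_of_notMem (fun hpl => hlk ?_) _
  exact iterate_injOn_Iio_minimalPeriod (Finset.mem_range.1 hl) hk
    (hP.1.eq_of_mem_of_mem (hP.iterate_image_mem hB l) (hP.iterate_image_mem hB k) hpl hp)

lemma orbitVector_apply_of_forall_notMem {p : Fin n}
    (hp : ∀ k < minimalPeriod (Set.image w) B, p ∉ (Set.image w)^[k] B) :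
    orbitVector w c B p = 0 :=
  Finset.sum_eq_zero fun k hk => Set.indicator_of_notMem (hp k (Finset.mem_range.1 hk)) _

lemma orbitVector_eq_of_mem_block (hP : IsWStablePartition w P) (hB : B ∈ P)
    {D : Set (Fin n)} (hD : D ∈ P) {p q : Fin n} (hp : p ∈ D) (hq : q ∈ D) :
    orbitVector w c B p = orbitVector w c B q := by
  refine Finset.sum_congr rfl fun k _ => ?_
  have hpq := hP.1.mem_iff_mem hD (hP.iterate_image_mem hB k) hp hq
  by_cases hpk : p ∈ (Set.image w)^[k] B
  · rw [Set.indicator_of_mem hpk, Set.indicator_of_mem (hpq.1 hpk)]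
  · rw [Set.indicator_of_notMem hpk, Set.indicator_of_notMem (mt hpq.2 hpk)]

-- Shifting the summation index by one is harmless because the summand is periodic.
lemma orbitVector_apply_perm (hc : c ^ minimalPeriod (Set.image w) B = 1) (p : Fin n) :
    orbitVector w c B (w p) = c * orbitVector w c B p := by
  set g : ℕ → ℂ := fun k => ((Set.image w)^[k] B).indicator (fun _ => c ^ k) (w p)
  have hshift : ∀ k, g (k + 1) = c * ((Set.image w)^[k] B).indicator (fun _ => c ^ k) p := by
    intro k
    have hmem : w p ∈ (Set.image w)^[k + 1] B ↔ p ∈ (Set.image w)^[k] B := by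
      rw [iterate_succ_apply']
      exact w.injective.mem_set_image
    by_cases hpk : p ∈ (Set.image w)^[k] B
    · simp only [g, Set.indicator_of_mem hpk, Set.indicator_of_mem (hmem.2 hpk), pow_succ']
    · simp only [g, Set.indicator_of_notMem hpk, Set.indicator_of_notMem (mt hmem.1 hpk),
        mul_zero]
  have hperiodic : g (minimalPeriod (Set.image w) B) = g 0 := by
    simp only [g, iterate_minimalPeriod, hc, pow_zero, iterate_zero_apply]
  calc orbitVector w c B (w p) = ∑ k ∈ Finset.range (minimalPeriod (Set.image w) B), g k := rfl
    _ = ∑ k ∈ Finset.range (minimalPeriod (Set.image w) B), g (k + 1) := by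
      rw [← add_left_inj (g _), ← Finset.sum_range_succ, Finset.sum_range_succ', hperiodic]
    _ = c * orbitVector w c B p := by simp only [hshift, orbitVector, Finset.mul_sum]

end OrbitVector

lemma exists_mem_eigSpace_inter_perp_ne {w : Equiv.Perm (Fin n)} {ζ : ℂ} {d : ℕ}
    {P : Set (Set (Fin n))} (hP : IsWStablePartition w P) (hζ : IsPrimitiveRoot ζ d)
    (hζ1 : ζ ≠ 1) {B C : Set (Fin n)} (hB : B ∈ P) (hBd : minimalPeriod (Set.image w) B = d)
    (hC : C ∈ P) (hCB : C ≠ B) {i j : Fin n} (hi : i ∈ B) (hj : j ∈ C) :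
    ∃ x ∈ eigSpace w ζ ∩ perp (rootsOfPartitionC P), x i ≠ x j := by
  have hd : 0 < d := hBd ▸ minimalPeriod_pos_of_mem_periodicPts (mem_periodicPts_image_perm w B)
  have hxi : orbitVector w ζ⁻¹ B i = 1 := orbitVector_apply_of_mem hP hB (k := 0) (hBd ▸ hd) hi
  have hxj : orbitVector w ζ⁻¹ B j ≠ 1 := by
    by_cases h : ∃ k < d, j ∈ (Set.image w)^[k] B
    · obtain ⟨k, hk, hjk⟩ := h
      have hk0 : k ≠ 0 := by
        rintro rfl
        exact hCB (hP.1.eq_of_mem_of_mem hC hB hj hjk)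
      rw [orbitVector_apply_of_mem hP hB (hBd ▸ hk) hjk]
      exact hζ.inv.pow_ne_one_of_pos_of_lt hk0 hk
    · push Not at h
      rw [orbitVector_apply_of_forall_notMem (hBd ▸ h)]
      exact zero_ne_one
  refine ⟨orbitVector w ζ⁻¹ B, ⟨(mem_eigSpace_iff_of_ne_one hζ1).2 fun p => ?_,
    mem_perp_rootsOfPartitionC_iff.2 fun D hD p hp q hq =>
      orbitVector_eq_of_mem_block hP hB hD hp hq⟩, hxi ▸ hxj.symm⟩
  rw [orbitVector_apply_perm (hBd ▸ hζ.inv.pow_eq_one), mul_inv_cancel_left₀ (hζ.ne_zero hd.ne')]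

theorem perp_eigSpace_inter_rootSetC_eq_iff {w : Equiv.Perm (Fin n)} {ζ : ℂ} {d : ℕ}
    {P : Set (Set (Fin n))} (hd : d ≠ 1) (hw : w ^ d = 1) (hζ : IsPrimitiveRoot ζ d)
    (hP : IsWStablePartition w P) :
    perp (eigSpace w ζ ∩ perp (rootsOfPartitionC P)) ∩ rootSetC n = rootsOfPartitionC P ↔
      {B ∈ P | minimalPeriod (Set.image w) B ≠ d}.Subsingleton := by
  have hζ1 : ζ ≠ 1 := fun h => hd (hζ.eq_orderOf.trans (h ▸ orderOf_one))
  rw [perp_inter_rootSetC_eq_rootsOfPartitionC_iff fun x hx => mem_perp_rootsOfPartitionC_iff.1 hx.2]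
  constructor
  · rintro h B ⟨hB, hBd⟩ C ⟨hC, hCd⟩
    by_contra hBC
    obtain ⟨i, hi⟩ := hP.1.1 B hB
    obtain ⟨j, hj⟩ := hP.1.1 C hC
    obtain ⟨x, ⟨hxeig, hxP⟩, hxij⟩ := h i j
      (by rintro rfl; exact hBC (hP.1.eq_of_mem_of_mem hB hC hi hj))
      (by rintro ⟨D, hD, hiD, hjD⟩
          exact hBC ((hP.1.eq_of_mem_of_mem hB hD hi hiD).trans (hP.1.eq_of_mem_of_mem hD hC hjD hj)))
    rw [mem_eigSpace_iff_of_ne_one hζ1] at hxeig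
    rw [mem_perp_rootsOfPartitionC_iff] at hxP
    have hvanish {D : Set (Fin n)} (hD : D ∈ P) (hDd : minimalPeriod (Set.image w) D ≠ d)
        {p : Fin n} (hp : p ∈ D) : x p = 0 :=
      eq_zero_of_minimalPeriod_ne hζ hxeig (hxP D hD) (minimalPeriod_image_perm_dvd hw D) hDd hp
    exact hxij ((hvanish hB hBd hi).trans (hvanish hC hCd hj).symm)
  · intro h i j _ hij
    obtain ⟨B, hB, hi⟩ := hP.1.exists_mem i
    obtain ⟨C, hC, hj⟩ := hP.1.exists_mem j
    have hBC : B ≠ C := by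
      rintro rfl
      exact hij ⟨B, hB, hi, hj⟩
    by_cases hBd : minimalPeriod (Set.image w) B = d
    · exact exists_mem_eigSpace_inter_perp_ne hP hζ hζ1 hB hBd hC hBC.symm hi hj
    · have hCd : minimalPeriod (Set.image w) C = d := by
        by_contra hCd
        exact hBC (h ⟨hB, hBd⟩ ⟨hC, hCd⟩)
      obtain ⟨x, hx, hxji⟩ := exists_mem_eigSpace_inter_perp_ne hP hζ hζ1 hC hCd hB hBC hj hi
      exact ⟨x, hx, hxji.symm⟩

lemma orbit_condition_iff {w : Equiv.Perm (Fin n)} {d : ℕ} {P : Set (Set (Fin n))}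
    (hd : d ≠ 1) (hP : IsWStablePartition w P) :
    ({B ∈ P | ⇑w '' B = B}.Subsingleton ∧
        ∀ B ∈ P, ⇑w '' B ≠ B → (blockOrbit w B).ncard = d) ↔
      {B ∈ P | minimalPeriod (Set.image w) B ≠ d}.Subsingleton := by
  simp only [ncard_blockOrbit]
  constructor
  · rintro ⟨hsub, horb⟩ B ⟨hB, hBd⟩ C ⟨hC, hCd⟩
    have hfixed : ∀ D ∈ P, minimalPeriod (Set.image w) D ≠ d → ⇑w '' D = D :=
      fun D hD hDd => by_contra fun h => hDd (horb D hD h)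
    exact hsub ⟨hB, hfixed B hB hBd⟩ ⟨hC, hfixed C hC hCd⟩
  · intro h
    refine ⟨h.anti fun B ⟨hB, hBw⟩ => ⟨hB, ?_⟩, fun B hB hBw => ?_⟩
    · rw [minimalPeriod_eq_one_iff_isFixedPt.2 hBw]
      exact Ne.symm hd
    · by_contra hBd
      have hwB : minimalPeriod (Set.image w) (⇑w '' B) = minimalPeriod (Set.image w) B :=
        minimalPeriod_apply (mem_periodicPts_image_perm w B)
      exact hBw (h ⟨hP.2 B hB, hwB ▸ hBd⟩ ⟨hB, hBd⟩)

end Development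

theorem eigenspace_condition_iff_orbit_condition_general
    (n d₀ : ℕ) (hn : 1 ≤ n) (a : ℕ) (ha : a = n / d₀)
    (w : Equiv.Perm (Fin n)) (hw : w.cycleType = Multiset.replicate a d₀)
    (ζ : ℂ) (hζ : IsPrimitiveRoot ζ d₀)
    (P : Set (Set (Fin n))) (hP : IsWStablePartition w P) :
    (perp (eigSpace w ζ ∩ perp (rootsOfPartitionC P)) ∩ rootSetC n = rootsOfPartitionC P)
      ↔
    (({B ∈ P | (⇑w) '' B = B}).Subsingleton ∧
      ∀ B ∈ P, (⇑w) '' B ≠ B → (blockOrbit w B).ncard = d₀) := by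
  have hd : d₀ ≠ 1 := by
    rintro rfl
    have h1 : 1 ∈ w.cycleType := by
      rw [hw, ha, Nat.div_one]
      exact Multiset.mem_replicate.2 ⟨by omega, rfl⟩
    exact absurd (Equiv.Perm.two_le_of_mem_cycleType h1) (by norm_num)
  have hwd : w ^ d₀ = 1 := by
    rw [← orderOf_dvd_iff_pow_eq_one, ← Equiv.Perm.lcm_cycleType, hw]
    exact Multiset.lcm_dvd.2 fun b hb => (Multiset.eq_of_mem_replicate hb).dvd
  rw [perp_eigSpace_inter_rootSetC_eq_iff hd hwd hζ hP, orbit_condition_iff hd hP]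

/-- for a `w`-stable partition `λ` (with `w` a product of `a = ⌊n/d₀⌋`
disjoint `d₀`-cycles and `ζ` a primitive `d₀`-th root of unity), the condition
`(𝒱(w,ζ) ∩ Γ_λ^⊥)^⊥ ∩ Γ = Γ_λ` is equivalent to: `w` permutes the blocks of `λ` with at
most one fixed block, all other orbits of blocks having length `d₀`. -/
theorem eigenspace_condition_iff_orbit_condition
    (n d₀ : ℕ) (hn : 1 ≤ n) (hd₀ : 1 ≤ d₀) (a : ℕ) (ha : a = n / d₀)
    (w : Equiv.Perm (Fin n)) (hw : w.cycleType = Multiset.replicate a d₀)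
    (ζ : ℂ) (hζ : IsPrimitiveRoot ζ d₀)
    (P : Set (Set (Fin n))) (hP : IsWStablePartition w P) :
    (perp (eigSpace w ζ ∩ perp (rootsOfPartitionC P)) ∩ rootSetC n = rootsOfPartitionC P)
      ↔
    (({B ∈ P | (⇑w) '' B = B}).Subsingleton ∧
      ∀ B ∈ P, (⇑w) '' B ≠ B → (blockOrbit w B).ncard = d₀) :=
  eigenspace_condition_iff_orbit_condition_general n d₀ hn a ha w hw ζ hζ P hP
end
end
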